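/- arXiv:1310.8328 — 2 statements merged into one kernel-verified Lean document; each statement's English description precedes it below -/
import Mathlib

section
/- Define R : [−r, r] → ℝ by R(x) = (2/κ²)·exp(−2V(x)/κ²)·∫_{x}^{r} (H(v) − C(κ))·exp(2V(v)/κ²) dv. Then R(r) = 0, R(−r) = 0, and for every x ∈ (−r, r) with x ≠ 0 the function R is differentiable at x and satisfies −φ(x)·R(x) + (κ²/2)·R′(x) = C(κ) − H(x). -/
/-!
With the weight `w = exp (2V/κ²)`, `R = (2/κ²) w⁻¹ ∫ₓʳ (H - C) w`, and the ODE is the product rule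
for the integrating factor `w⁻¹` (whose derivative is `(2φ/κ²) w⁻¹`), valid wherever `H` is
continuous, i.e. off `0`. The constant `C(κ)` is exactly the one making `∫₋ᵣʳ (H - C) w = 0`, which
gives the boundary condition at `-r`; the one at `r` is an empty integral.
-/

open MeasureTheory Real Set Filter Topology

theorem ContinuousOn.continuous_ite_Icc {A : ℝ → ℝ} {a b : ℝ} (hab : a ≤ b)
    (hA : ContinuousOn A (Icc a b)) :
    Continuous fun u => if u ≤ a then A a else if u < b then A u else A b := by
  convert hA.domRestrict.Icc_extend' (h := hab) using 1
  funext u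
  rcases le_or_gt u a with hua | hau
  · simp [hua, IccExtend_of_le_left hab _ hua]
  rcases lt_or_ge u b with hub | hbu
  · simp [hau.not_ge, hub, IccExtend_of_mem hab _ ⟨hau.le, hub.le⟩]
  · simp [hau.not_ge, hbu.not_gt, IccExtend_of_right_le hab _ hbu]

theorem continuousAt_ite_nonneg {x : ℝ} (hx : x ≠ 0) (p q : ℝ) :
    ContinuousAt (fun v : ℝ => if 0 ≤ v then p else q) x := by
  rcases hx.lt_or_gt with hneg | hpos
  · refine (continuousAt_const (y := q)).congr ?_
    filter_upwards [Iio_mem_nhds hneg] with v hv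
    simp [(mem_Iio.mp hv).not_ge]
  · refine (continuousAt_const (y := p)).congr ?_
    filter_upwards [Ioi_mem_nhds hpos] with v hv
    simp [(mem_Ioi.mp hv).le]

theorem ite_nonneg_mul_eq_indicator (g : ℝ → ℝ) :
    (fun v : ℝ => (if 0 ≤ v then 1 else 0) * g v) = (Ici 0).indicator g := by
  funext v
  by_cases hv : 0 ≤ v <;> simp [hv]

theorem integral_ite_nonneg_mul {g : ℝ → ℝ} {a c : ℝ} (ha : a ≤ 0) (hc : 0 ≤ c) :
    ∫ v in a..c, (if 0 ≤ v then 1 else 0) * g v = ∫ v in 0..c, g v := by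
  have hae : (Ici (0 : ℝ)).indicator g =ᵐ[volume] (Ioi 0).indicator g :=
    indicator_ae_eq_of_ae_eq_set Ioi_ae_eq_Ici.symm
  rw [ite_nonneg_mul_eq_indicator, intervalIntegral.integral_of_le (ha.trans hc),
    integral_congr_ae (ae_restrict_of_ae hae), setIntegral_indicator measurableSet_Ioi,
    Ioc_inter_Ioi, max_eq_right ha, intervalIntegral.integral_of_le hc]

theorem integral_ite_nonneg_sub_div_mul_eq_zero {g : ℝ → ℝ} {a c : ℝ} (ha : a ≤ 0)
    (hc : 0 ≤ c) (hg : IntervalIntegrable g volume a c) (hg0 : ∫ w in a..c, g w ≠ 0) :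
    ∫ v in a..c, ((if 0 ≤ v then 1 else 0) - (∫ w in 0..c, g w) / ∫ w in a..c, g w) * g v
      = 0 := by
  have hHg : IntervalIntegrable (fun v => (if 0 ≤ v then 1 else 0) * g v) volume a c := by
    rw [ite_nonneg_mul_eq_indicator]
    exact ⟨hg.1.indicator measurableSet_Ici, hg.2.indicator measurableSet_Ici⟩
  simp only [sub_mul]
  rw [intervalIntegral.integral_sub hHg (hg.const_mul _), integral_ite_nonneg_mul ha hc,
    intervalIntegral.integral_const_mul, div_mul_cancel₀ _ hg0, sub_self]

theorem hasDerivAt_exp_neg_mul_integral_mul_exp {W h : ℝ → ℝ} {w x b : ℝ}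
    (hW : HasDerivAt W w x) (hWc : Continuous W) (hmeas : Measurable h)
    (hint : IntervalIntegrable h volume x b) (hh : ContinuousAt h x) :
    HasDerivAt (fun y => exp (-W y) * ∫ v in y..b, h v * exp (W v))
      (-w * (exp (-W x) * ∫ v in x..b, h v * exp (W v)) - h x) x := by
  have hexpW : Continuous fun v => exp (W v) := by fun_prop
  have hI : HasDerivAt (fun y => ∫ v in y..b, h v * exp (W v)) (-(h x * exp (W x))) x :=
    intervalIntegral.integral_hasDerivAt_left (hint.mul_continuousOn hexpW.continuousOn)
      (hmeas.mul hexpW.measurable).stronglyMeasurable.stronglyMeasurableAtFilter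
      (hh.mul hexpW.continuousAt)
  refine ((hW.neg.exp).mul hI).congr_deriv ?_
  simp only [Pi.neg_apply, exp_neg]
  field_simp
  ring

/-- The function `R` solves the time-integrated Fokker–Planck boundary value
problem: it vanishes at `±r` and satisfies `-φ R + (κ²/2) R′ = C - H` away
from `0`. -/
theorem stmt6
    (aminus aplus : ℝ) (A : ℝ → ℝ)
    (hAcont : ContinuousOn A (Set.Icc (-1) 1))
    (hAm : A (-1) = aminus) (hAp : A 1 = aplus)
    (φ : ℝ → ℝ)
    (hφ : ∀ u : ℝ, φ u = if u ≤ -1 then aminus else if u < 1 then A u else aplus)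
    (V : ℝ → ℝ)
    (hV : ∀ x : ℝ, V x = -∫ v in (-1:ℝ)..x, φ v)
    (κ r : ℝ) (hκ : 0 < κ) (hr : 1 < r)
    (H : ℝ → ℝ) (hH : ∀ v : ℝ, H v = if 0 ≤ v then 1 else 0)
    (C : ℝ)
    (hC : C = (∫ w in (0:ℝ)..r, Real.exp (2 * V w / κ ^ 2)) /
      (∫ w in (-r)..r, Real.exp (2 * V w / κ ^ 2)))
    (R : ℝ → ℝ)
    (hR : ∀ x : ℝ, R x = 2 / κ ^ 2 * Real.exp (-2 * V x / κ ^ 2) *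
      ∫ v in x..r, (H v - C) * Real.exp (2 * V v / κ ^ 2)) :
    R r = 0 ∧ R (-r) = 0 ∧
    ∀ x ∈ Set.Ioo (-r) r, x ≠ 0 →
      DifferentiableAt ℝ R x ∧
      -φ x * R x + κ ^ 2 / 2 * deriv R x = C - H x := by
  have hφc : Continuous φ := by
    rw [funext hφ, ← hAm, ← hAp]
    exact hAcont.continuous_ite_Icc (by norm_num)
  have hV' (x : ℝ) : HasDerivAt V (-φ x) x := by
    rw [funext hV]
    exact (hφc.integral_hasStrictDerivAt (-1) x).hasDerivAt.neg
  have hVc : Continuous V := continuous_iff_continuousAt.2 fun x => (hV' x).continuousAt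
  have hweight : Continuous fun w => exp (2 * V w / κ ^ 2) := by fun_prop
  have hmass : 0 < ∫ w in (-r)..r, exp (2 * V w / κ ^ 2) :=
    intervalIntegral.intervalIntegral_pos_of_pos (hweight.intervalIntegrable _ _)
      (fun _ => exp_pos _) (by linarith)
  have hH' : H = fun v => if 0 ≤ v then 1 else 0 := funext hH
  refine ⟨by simp [hR], ?_, fun x _ hx0 => ?_⟩
  · rw [hR, hH', hC, integral_ite_nonneg_sub_div_mul_eq_zero (by linarith) (by linarith)
      (hweight.intervalIntegrable _ _) hmass.ne', mul_zero]
  have hR' : R = fun y => 2 / κ ^ 2 * (exp (-(2 * V y / κ ^ 2)) *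
      ∫ v in y..r, (H v - C) * exp (2 * V v / κ ^ 2)) :=
    funext fun y => by rw [hR, neg_mul, neg_div, mul_assoc]
  have hHC : Monotone fun v => H v - C := fun a b hab => by
    simp only [hH]
    split_ifs <;> linarith
  have hRx := (hasDerivAt_exp_neg_mul_integral_mul_exp (b := r)
    (((hV' x).const_mul 2).div_const (κ ^ 2)) (by fun_prop) hHC.measurable
    hHC.intervalIntegrable ((hH' ▸ continuousAt_ite_nonneg hx0 1 0).sub continuousAt_const)
    ).const_mul (2 / κ ^ 2)
  rw [← hR'] at hRx
  refine ⟨hRx.differentiableAt, ?_⟩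
  rw [hRx.deriv, hR']
  field_simp
  ring
end

section
/- Suppose a⁻ > 0 and a⁺ > 0, and let V_max = max_{w ∈ [0,1]} V(w). Then C(κ) ≤ (1 + κ²/(2a⁺))·exp(2V_max/κ²) · (2a⁻) / (κ²·(exp(2a⁻(r−1)/κ²) − 1)). In particular, for fixed r the constant C(κ) is exponentially small as κ → 0⁺. -/
/-!
On `[0, 1]` the integrand `exp (2 V / κ²)` is at most `exp (2 Vmax / κ²)`; on `[1, r]` the
potential decreases linearly with slope `a⁺` from `V 1 ≤ Vmax`, so that piece contributes at most
`exp (2 Vmax / κ²) · κ² / (2 a⁺)`. The denominator is bounded below by its piece over `[-r, -1]`,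
where `V` grows linearly with slope `a⁻` to the left, and which integrates exactly to
`κ² (exp (2 a⁻ (r - 1) / κ²) - 1) / (2 a⁻)`.
-/

open MeasureTheory Real Set

theorem continuous_of_eq_ite_of_continuousOn_Icc {α β : Type*} [LinearOrder α]
    [TopologicalSpace α] [OrderTopology α] [TopologicalSpace β] {a b : α} (hab : a ≤ b)
    {A φ : α → β} (hA : ContinuousOn A (Icc a b))
    (hφ : ∀ u, φ u = if u ≤ a then A a else if u < b then A u else A b) : Continuous φ := by
  have hext : φ = IccExtend hab ((Icc a b).domRestrict A) := by
    funext u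
    rw [hφ]
    split_ifs with hua hub
    · rw [IccExtend_of_le_left _ _ hua]; rfl
    · rw [IccExtend_of_mem _ _ ⟨(not_le.1 hua).le, hub.le⟩]; rfl
    · rw [IccExtend_of_right_le _ _ (not_lt.1 hub)]; rfl
  rw [hext]
  exact continuous_IccExtend_iff.2 hA.domRestrict

theorem integral_exp_mul_add {c : ℝ} (hc : c ≠ 0) (d a b : ℝ) :
    ∫ w in a..b, exp (c * w + d) = (exp (c * b + d) - exp (c * a + d)) / c := by
  rw [intervalIntegral.integral_comp_mul_add (fun x => exp x) hc, integral_exp, smul_eq_mul,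
    inv_mul_eq_div]

theorem integral_exp_sub_mul_sub_le {l : ℝ} (hl : 0 < l) (β a b : ℝ) :
    ∫ w in a..b, exp (β - l * (w - a)) ≤ exp β / l := by
  have hlin : ∀ w, β - l * (w - a) = -l * w + (β + l * a) := fun w => by ring
  simp_rw [hlin]
  rw [integral_exp_mul_add (neg_ne_zero.2 hl.ne'), ← hlin, ← hlin, sub_self, mul_zero, sub_zero,
    div_neg, ← neg_div, neg_sub]
  gcongr
  exact sub_le_self _ (exp_pos _).le

theorem integral_exp_mul_sub {μ : ℝ} (hμ : μ ≠ 0) (a b : ℝ) :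
    ∫ w in a..b, exp (μ * (b - w)) = (exp (μ * (b - a)) - 1) / μ := by
  have hlin : ∀ w, μ * (b - w) = -μ * w + μ * b := fun w => by ring
  simp_rw [hlin]
  rw [integral_exp_mul_add (neg_ne_zero.2 hμ), ← hlin, ← hlin, sub_self, mul_zero, exp_zero,
    div_neg, ← neg_div, neg_sub]

section Potential

variable {aminus aplus : ℝ} {A φ V : ℝ → ℝ}

theorem potential_eq_of_le_neg_one
    (hφ : ∀ u, φ u = if u ≤ -1 then aminus else if u < 1 then A u else aplus)
    (hV : ∀ x, V x = -∫ v in (-1 : ℝ)..x, φ v) {x : ℝ} (hx : x ≤ -1) :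
    V x = -aminus * (x + 1) := by
  have hconst : EqOn φ (fun _ => aminus) (uIcc (-1) x) := fun u hu => by
    rw [uIcc_of_ge hx] at hu
    rw [hφ, if_pos hu.2]
  rw [hV, intervalIntegral.integral_congr hconst, intervalIntegral.integral_const, smul_eq_mul]
  ring

theorem potential_eq_of_one_le
    (hφ : ∀ u, φ u = if u ≤ -1 then aminus else if u < 1 then A u else aplus)
    (hV : ∀ x, V x = -∫ v in (-1 : ℝ)..x, φ v) (hφc : Continuous φ) {x : ℝ} (hx : 1 ≤ x) :
    V x = V 1 - aplus * (x - 1) := by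
  have hconst : EqOn φ (fun _ => aplus) (uIcc 1 x) := fun u hu => by
    rw [uIcc_of_le hx] at hu
    rw [hφ, if_neg (by linarith [hu.1]), if_neg (not_lt.2 hu.1)]
  rw [hV, hV, ← intervalIntegral.integral_add_adjacent_intervals (hφc.intervalIntegrable (-1) 1)
    (hφc.intervalIntegrable 1 x), intervalIntegral.integral_congr hconst,
    intervalIntegral.integral_const, smul_eq_mul]
  ring

theorem continuous_potential (hV : ∀ x, V x = -∫ v in (-1 : ℝ)..x, φ v) (hφc : Continuous φ) :
    Continuous V :=
  (intervalIntegral.continuous_primitive (fun a b => hφc.intervalIntegrable a b) (-1)).neg.congr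
    fun x => (hV x).symm

end Potential

theorem integral_exp_potential_le {aplus κ r Vmax : ℝ} {V : ℝ → ℝ} (hVc : Continuous V)
    (hright : ∀ x, 1 ≤ x → V x = V 1 - aplus * (x - 1)) (hap : 0 < aplus) (hκ : κ ≠ 0)
    (hr : 1 ≤ r) (hVmax : ∀ w ∈ Icc (0 : ℝ) 1, V w ≤ Vmax) :
    ∫ w in (0 : ℝ)..r, exp (2 * V w / κ ^ 2)
      ≤ (1 + κ ^ 2 / (2 * aplus)) * exp (2 * Vmax / κ ^ 2) := by
  have hint : ∀ a b, IntervalIntegrable (fun w => exp (2 * V w / κ ^ 2)) volume a b :=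
    fun a b => (by fun_prop : Continuous fun w => exp (2 * V w / κ ^ 2)).intervalIntegrable a b
  have hexp_le : ∀ w ∈ Icc (0 : ℝ) 1, exp (2 * V w / κ ^ 2) ≤ exp (2 * Vmax / κ ^ 2) :=
    fun w hw => by gcongr; exact hVmax w hw
  have hunit : ∫ w in (0 : ℝ)..1, exp (2 * V w / κ ^ 2) ≤ exp (2 * Vmax / κ ^ 2) := by
    simpa using intervalIntegral.integral_mono_on zero_le_one (hint 0 1) intervalIntegrable_const
      hexp_le
  have htail : ∫ w in (1 : ℝ)..r, exp (2 * V w / κ ^ 2)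
      ≤ exp (2 * Vmax / κ ^ 2) * (κ ^ 2 / (2 * aplus)) := by
    have hlin : EqOn (fun w => exp (2 * V w / κ ^ 2))
        (fun w => exp (2 * V 1 / κ ^ 2 - 2 * aplus / κ ^ 2 * (w - 1))) (uIcc 1 r) :=
      fun w hw => by
        rw [uIcc_of_le hr] at hw
        simp only [hright w hw.1]
        ring_nf
    calc _ = ∫ w in (1 : ℝ)..r, exp (2 * V 1 / κ ^ 2 - 2 * aplus / κ ^ 2 * (w - 1)) :=
          intervalIntegral.integral_congr hlin
      _ ≤ exp (2 * V 1 / κ ^ 2) / (2 * aplus / κ ^ 2) :=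
          integral_exp_sub_mul_sub_le (by positivity) _ _ _
      _ ≤ exp (2 * Vmax / κ ^ 2) / (2 * aplus / κ ^ 2) := by
          gcongr; exact hVmax 1 ⟨zero_le_one, le_rfl⟩
      _ = _ := by field_simp
  rw [← intervalIntegral.integral_add_adjacent_intervals (hint 0 1) (hint 1 r)]
  linarith

theorem le_integral_exp_potential {aminus κ r : ℝ} {V : ℝ → ℝ} (hVc : Continuous V)
    (hleft : ∀ x, x ≤ -1 → V x = -aminus * (x + 1)) (ham : aminus ≠ 0) (hκ : κ ≠ 0)
    (hr : 1 ≤ r) :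
    κ ^ 2 * (exp (2 * aminus * (r - 1) / κ ^ 2) - 1) / (2 * aminus)
      ≤ ∫ w in (-r)..r, exp (2 * V w / κ ^ 2) := by
  have hint : ∀ a b, IntervalIntegrable (fun w => exp (2 * V w / κ ^ 2)) volume a b :=
    fun a b => (by fun_prop : Continuous fun w => exp (2 * V w / κ ^ 2)).intervalIntegrable a b
  have hlin : EqOn (fun w => exp (2 * V w / κ ^ 2))
      (fun w => exp (2 * aminus / κ ^ 2 * (-1 - w))) (uIcc (-r) (-1)) := fun w hw => by
    rw [uIcc_of_le (by linarith)] at hw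
    simp only [hleft w hw.2]
    ring_nf
  have hhead : ∫ w in (-r)..(-1), exp (2 * V w / κ ^ 2)
      = κ ^ 2 * (exp (2 * aminus * (r - 1) / κ ^ 2) - 1) / (2 * aminus) := by
    rw [intervalIntegral.integral_congr hlin, integral_exp_mul_sub (by positivity)]
    field_simp
    ring_nf
  have hrest : 0 ≤ ∫ w in (-1)..r, exp (2 * V w / κ ^ 2) :=
    intervalIntegral.integral_nonneg (by linarith) fun w _ => (exp_pos _).le
  rw [← intervalIntegral.integral_add_adjacent_intervals (hint (-r) (-1)) (hint (-1) r), hhead]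
  linarith

/-- In a crossing region (`a⁻, a⁺ > 0`) the constant `C(κ)` is exponentially
small as `κ → 0⁺`: an explicit upper bound. -/
theorem stmt8
    (aminus aplus : ℝ) (A : ℝ → ℝ)
    (hAcont : ContinuousOn A (Set.Icc (-1) 1))
    (hAm : A (-1) = aminus) (hAp : A 1 = aplus)
    (φ : ℝ → ℝ)
    (hφ : ∀ u : ℝ, φ u = if u ≤ -1 then aminus else if u < 1 then A u else aplus)
    (V : ℝ → ℝ)
    (hV : ∀ x : ℝ, V x = -∫ v in (-1:ℝ)..x, φ v)
    (ham : 0 < aminus) (hap : 0 < aplus)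
    (κ r : ℝ) (hκ : 0 < κ) (hr : 1 < r)
    (C : ℝ)
    (hC : C = (∫ w in (0:ℝ)..r, Real.exp (2 * V w / κ ^ 2)) /
      (∫ w in (-r)..r, Real.exp (2 * V w / κ ^ 2)))
    (Vmax : ℝ) (hVmax : IsGreatest (V '' Set.Icc (0:ℝ) 1) Vmax) :
    C ≤ (1 + κ ^ 2 / (2 * aplus)) * Real.exp (2 * Vmax / κ ^ 2) * (2 * aminus) /
      (κ ^ 2 * (Real.exp (2 * aminus * (r - 1) / κ ^ 2) - 1)) := by
  have hφc : Continuous φ :=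
    continuous_of_eq_ite_of_continuousOn_Icc (by norm_num) hAcont fun u => by rw [hφ, hAm, hAp]
  have hVc : Continuous V := continuous_potential hV hφc
  have hnum := integral_exp_potential_le hVc (fun x => potential_eq_of_one_le hφ hV hφc) hap
    hκ.ne' hr.le fun w hw => hVmax.2 ⟨w, hw, rfl⟩
  have hden := le_integral_exp_potential hVc (fun x => potential_eq_of_le_neg_one hφ hV) ham.ne'
    hκ.ne' hr.le
  have hgrowth : 1 < exp (2 * aminus * (r - 1) / κ ^ 2) :=
    one_lt_exp_iff.2 (div_pos (mul_pos (mul_pos two_pos ham) (sub_pos.2 hr)) (by positivity))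
  have hden_pos : 0 < κ ^ 2 * (exp (2 * aminus * (r - 1) / κ ^ 2) - 1) / (2 * aminus) := by
    have := sub_pos.2 hgrowth
    positivity
  rw [hC, ← div_div_eq_mul_div]
  exact div_le_div₀ (by positivity) hnum hden_pos hden
end
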